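/- Kučera: Every Martin-Löf random sequence has diagonally noncomputable degree: for every Martin-Löf random A ∈ 2^ω there is a total function f : ℕ → ℕ recursive in A such that f(e) ≠ φ_e(e) for every e with φ_e(e)↓. -/

import Mathlib

open scoped ENNReal NNReal Classical

namespace AR

/-- Elements of Cantor space `2^ω`: infinite binary sequences. -/
abbrev Seq := ℕ → Bool

/-- Finite binary strings `2^{<ω}`. -/
abbrev Str := List Bool

/-- The first `n` bits of a sequence `A`, as a finite string (`A↾n`). -/
def pre (A : Seq) (n : ℕ) : Str := List.ofFn fun i : Fin n => A i

/-- The basic clopen cylinder `[σ]` of all sequences extending `σ`. -/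
def cyl (σ : Str) : Set Seq := {A | pre A σ.length = σ}

/-- A measure on Cantor space is *fair-coin* if every cylinder `[σ]` has measure
`2^{-|σ|}`; this uniquely characterizes the usual product measure `μ` on `2^ω`. -/
def FairCoin (μ : MeasureTheory.Measure Seq) : Prop :=
  ∀ σ : Str, μ (cyl σ) = (2 : ℝ≥0∞)⁻¹ ^ σ.length

/-- A machine is a partial computable function `2^{<ω} ⇀ 2^{<ω}`. -/
def IsMachine (M : Str →. Str) : Prop := Partrec M

/-- Kolmogorov complexity of `τ` relative to the machine `M`:
`C_M(τ) = min{|σ| : M(σ)↓ = τ}`, with value `∞` if no such `σ` exists. -/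
noncomputable def Cplx (M : Str →. Str) (τ : Str) : ℕ∞ :=
  sInf ((fun σ : Str => (σ.length : ℕ∞)) '' {σ | τ ∈ M σ})

/-- A universal machine: a machine simulating every machine up to an additive
constant.  `Cplx U` for universal `U` is plain Kolmogorov complexity `C`. -/
def UniversalMachine (U : Str →. Str) : Prop :=
  IsMachine U ∧ ∀ M : Str →. Str, IsMachine M → ∃ c : ℕ, ∀ τ, Cplx U τ ≤ Cplx M τ + c

/-- A set of strings is prefix-free if none of its elements is a proper initial
segment of another. -/
def PrefixFree (S : Set Str) : Prop :=
  ∀ σ ∈ S, ∀ τ ∈ S, σ <+: τ → σ = τ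

/-- A prefix-free machine: a machine whose domain is prefix-free. -/
def PrefixFreeMachine (M : Str →. Str) : Prop :=
  IsMachine M ∧ PrefixFree {σ | (M σ).Dom}

/-- A universal prefix-free machine.  `Cplx U` for such `U` is prefix-free
Kolmogorov complexity `K`. -/
def UniversalPFMachine (U : Str →. Str) : Prop :=
  PrefixFreeMachine U ∧
    ∀ M : Str →. Str, PrefixFreeMachine M → ∃ c : ℕ, ∀ τ, Cplx U τ ≤ Cplx M τ + c

/-- A c.e. (recursively enumerable) predicate. -/
def CEPred {α} [Primcodable α] (p : α → Prop) : Prop :=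
  Partrec fun a => Part.assert (p a) fun _ => Part.some ()

/-- A Martin-Löf test: a sequence of uniformly Σ⁰₁ classes `U i`, given by a single
c.e. set `W` of pairs, with `μ (U i) ≤ 2^{-i}`. -/
def MLTest (μ : MeasureTheory.Measure Seq) (U : ℕ → Set Seq) : Prop :=
  ∃ W : Set (ℕ × Str), CEPred (· ∈ W) ∧
    (∀ i, U i = ⋃ σ ∈ {σ : Str | (i, σ) ∈ W}, cyl σ) ∧
    ∀ i, μ (U i) ≤ (2 : ℝ≥0∞)⁻¹ ^ i

/-- `A` is Martin-Löf random if it passes every Martin-Löf test. -/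
def MLRandom (μ : MeasureTheory.Measure Seq) (A : Seq) : Prop :=
  ∀ U : ℕ → Set Seq, MLTest μ U → A ∉ ⋂ i, U i

/-- Oracle partial recursion: `RecIn O f` means that the partial function
`f : ℕ ⇀ ℕ` is partial recursive relative to the oracle `O`
(Mathlib's `Nat.RecursiveIn`). -/
inductive RecIn (O : ℕ →. ℕ) : (ℕ →. ℕ) → Prop
  | zero : RecIn O (pure 0)
  | succ : RecIn O Nat.succ
  | left : RecIn O ↑fun n : ℕ => n.unpair.1
  | right : RecIn O ↑fun n : ℕ => n.unpair.2
  | oracle : RecIn O O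
  | pair {f g} : RecIn O f → RecIn O g → RecIn O fun n => Nat.pair <$> f n <*> g n
  | comp {f g} : RecIn O f → RecIn O g → RecIn O fun n => g n >>= f
  | prec {f g} : RecIn O f → RecIn O g → RecIn O (Nat.unpaired fun a n =>
      n.rec (f a) fun y IH => do let i ← IH; g (Nat.pair a (Nat.pair y i)))
  | rfind {f} : RecIn O f →
      RecIn O fun a => Nat.rfind fun n => (fun m => m = 0) <$> f (Nat.pair a n)

/-- The characteristic-function oracle associated to a sequence `A ∈ 2^ω`. -/
def oracleOf (A : Seq) : ℕ →. ℕ := fun n => Part.some (cond (A n) 1 0)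

/-- The characteristic-function oracle associated to a set of naturals. -/
noncomputable def oracleOfSet (S : Set ℕ) : ℕ →. ℕ :=
  fun n => Part.some (if n ∈ S then 1 else 0)

/-- Relative partial computability for partial functions between coded types. -/
def PartrecIn (O : ℕ →. ℕ) {α σ} [Primcodable α] [Primcodable σ] (f : α →. σ) : Prop :=
  RecIn O fun n =>
    Part.bind (Encodable.decode (α := α) n) fun a => (f a).map Encodable.encode

/-- A predicate is c.e. relative to the oracle `O`. -/
def CEPredIn (O : ℕ →. ℕ) {α} [Primcodable α] (p : α → Prop) : Prop :=
  PartrecIn O fun a => Part.assert (p a) fun _ => Part.some ()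

/-- Turing reducibility between oracles: `f` is recursive in `g`. -/
def TuringLE (f g : ℕ →. ℕ) : Prop := RecIn g f

/-- Turing reducibility `B ≤_T A` between sequences. -/
def SeqTuringLE (B A : Seq) : Prop := TuringLE (oracleOf B) (oracleOf A)

/-- The `e`-th partial computable function `φ_e`, via Mathlib's standard
enumeration of codes for the partial recursive functions. -/
def phi (e : ℕ) : ℕ →. ℕ := (Denumerable.ofNat Nat.Partrec.Code e).eval

/-- The halting problem `∅' = {e : φ_e(e)↓}`. -/
def haltingSet : Set ℕ := {e | (phi e e).Dom}

/-- A Martin-Löf test relative to the oracle `O`. -/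
def MLTestIn (O : ℕ →. ℕ) (μ : MeasureTheory.Measure Seq) (U : ℕ → Set Seq) : Prop :=
  ∃ W : Set (ℕ × Str), CEPredIn O (· ∈ W) ∧
    (∀ i, U i = ⋃ σ ∈ {σ : Str | (i, σ) ∈ W}, cyl σ) ∧
    ∀ i, μ (U i) ≤ (2 : ℝ≥0∞)⁻¹ ^ i

/-- Martin-Löf randomness relative to the oracle `O`. -/
def MLRandomIn (O : ℕ →. ℕ) (μ : MeasureTheory.Measure Seq) (A : Seq) : Prop :=
  ∀ U : ℕ → Set Seq, MLTestIn O μ U → A ∉ ⋂ i, U i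

/-! Kučera's test `U i` is the union of the cylinders `[σ]` with `i < |σ|` and
`φ_{|σ|}(|σ|) = code σ`, for a code that is injective on strings of each length. Since
`φ_e(e)` names at most one string of length `e`, `μ (U i) ≤ ∑_{e > i} 2^{-e} = 2^{-i}`.
A random `A` avoids some `U i`, so `e ↦ code (A↾e)`, which is computable from `A`, differs
from `φ_e(e)` for every `e > i`; changing finitely many values yields a DNC function. -/

namespace RecIn

variable {O : ℕ →. ℕ}

lemma of_eq {f g : ℕ →. ℕ} (hf : RecIn O f) (h : ∀ n, f n = g n) : RecIn O g :=
  funext h ▸ hf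

lemma of_partrec {f : ℕ →. ℕ} (hf : Nat.Partrec f) : RecIn O f := by
  induction hf with
  | zero => exact .zero
  | succ => exact .succ
  | left => exact .left
  | right => exact .right
  | pair _ _ hf hg => exact .pair hf hg
  | comp _ _ hf hg => exact .comp hf hg
  | prec _ _ hf hg => exact .prec hf hg
  | rfind _ hf => exact .rfind hf

lemma of_primrec {f : ℕ → ℕ} (hf : Primrec f) : RecIn O ↑f :=
  of_partrec (Nat.Partrec.of_primrec (Primrec.nat_iff.mp hf))

lemma comp_total {g h : ℕ → ℕ} (hg : RecIn O ↑g) (hh : RecIn O ↑h) :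
    RecIn O ↑(fun n => g (h n)) :=
  (hg.comp hh).of_eq fun _ => Part.bind_some _ _

lemma pair_total {g h : ℕ → ℕ} (hg : RecIn O ↑g) (hh : RecIn O ↑h) :
    RecIn O ↑(fun n => Nat.pair (g n) (h n)) :=
  (hg.pair hh).of_eq fun n => by simp [Seq.seq]

lemma nat_rec (z : ℕ) {s : ℕ → ℕ → ℕ}
    (hs : RecIn O ↑(fun p : ℕ => s p.unpair.1 p.unpair.2)) :
    RecIn O ↑(fun n => Nat.rec (motive := fun _ => ℕ) z s n) := by
  have hstep : RecIn O ↑(fun m : ℕ => s m.unpair.2.unpair.1 m.unpair.2.unpair.2) :=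
    hs.comp_total (of_primrec (Primrec.snd.comp Primrec.unpair))
  have hprec : RecIn O ↑(fun p : ℕ => Nat.rec (motive := fun _ => ℕ) z s p.unpair.2) := by
    refine (RecIn.prec (of_primrec (Primrec.const z)) hstep).of_eq fun p => ?_
    simp only [Nat.unpaired, PFun.coe_val, Nat.unpair_pair]
    induction p.unpair.2 with
    | zero => rfl
    | succ n ih => simp only [ih]; exact Part.bind_some _ _
  exact (hprec.comp_total (of_primrec (Primrec₂.natPair.comp (Primrec.const 0) Primrec.id))).of_eq
    fun n => by simp

lemma of_eventuallyEq {c f : ℕ → ℕ} (hc : RecIn O ↑c) (h : f =ᶠ[Filter.atTop] c) :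
    RecIn O ↑f := by
  obtain ⟨N, hN⟩ := Filter.eventually_atTop.1 h
  -- the values of `f` below `N` are hard-coded in the list `L`
  let L := (List.range N).map f
  have hpatch : Primrec fun p : ℕ => if p.unpair.1 < N then L.getD p.unpair.1 0 else p.unpair.2 :=
    Primrec.ite (Primrec.nat_lt.comp (Primrec.fst.comp Primrec.unpair) (Primrec.const N))
      ((Primrec.list_getD 0).comp (Primrec.const L) (Primrec.fst.comp Primrec.unpair))
      (Primrec.snd.comp Primrec.unpair)
  refine ((of_primrec hpatch).comp_total ((of_primrec Primrec.id).pair_total hc)).of_eq fun n => ?_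
  simp only [PFun.coe_val, Nat.unpair_pair, id]
  split_ifs with hn
  · simp [L, hn]
  · simp [hN n (by omega)]

end RecIn

def markedCode (σ : Str) : ℕ := σ.foldl (fun n b => 2 * n + cond b 1 0) 1

lemma markedCode_append_singleton (σ : Str) (b : Bool) :
    markedCode (σ ++ [b]) = 2 * markedCode σ + cond b 1 0 := by
  simp [markedCode]

lemma markedCode_inj_of_length_eq {σ τ : Str} (hlen : σ.length = τ.length)
    (h : markedCode σ = markedCode τ) : σ = τ := by
  induction σ using List.reverseRecOn generalizing τ with
  | nil => simp_all [eq_comm]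
  | append_singleton σ a ih =>
    induction τ using List.reverseRecOn with
    | nil => simp at hlen
    | append_singleton τ b _ =>
      rw [markedCode_append_singleton, markedCode_append_singleton] at h
      have hab : a = b ∧ markedCode σ = markedCode τ := by
        cases a <;> cases b <;> simp at h ⊢ <;> omega
      rw [ih (by simpa using hlen) hab.2, hab.1]

lemma primrec_markedCode : Primrec markedCode :=
  Primrec.list_foldl Primrec.id (Primrec.const 1)
    ((Primrec.nat_add.comp (Primrec.nat_mul.comp (Primrec.const 2) Primrec.fst)
      (Primrec.cond Primrec.snd (Primrec.const 1) (Primrec.const 0))).comp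
        Primrec.snd).to₂

lemma length_pre (A : Seq) (n : ℕ) : (pre A n).length = n := by simp [pre]

lemma pre_succ (A : Seq) (n : ℕ) : pre A (n + 1) = pre A n ++ [A n] := by
  rw [pre, List.ofFn_succ', List.concat_eq_append]
  simp [pre, Fin.last]

lemma mem_cyl_pre (A : Seq) (n : ℕ) : A ∈ cyl (pre A n) := by
  simp [cyl, length_pre]

lemma recIn_oracleOf (A : Seq) : RecIn (oracleOf A) ↑(fun n => (cond (A n) 1 0 : ℕ)) := .oracle

lemma recIn_markedCode_pre (A : Seq) : RecIn (oracleOf A) ↑(fun n => markedCode (pre A n)) := by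
  have hbit : RecIn (oracleOf A) ↑(fun p : ℕ => (cond (A p.unpair.1) 1 0 : ℕ)) :=
    (recIn_oracleOf A).comp_total (RecIn.of_primrec (Primrec.fst.comp Primrec.unpair))
  have hstep : RecIn (oracleOf A) ↑(fun p : ℕ => 2 * p.unpair.2 + cond (A p.unpair.1) 1 0) := by
    simpa using (RecIn.of_primrec (Primrec.nat_add.comp
      (Primrec.nat_mul.comp (Primrec.const 2) (Primrec.snd.comp Primrec.unpair))
      (Primrec.fst.comp Primrec.unpair))).comp_total
      (hbit.pair_total (RecIn.of_primrec (Primrec.snd.comp Primrec.unpair)))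
  refine (RecIn.nat_rec 1 (s := fun y acc => 2 * acc + cond (A y) 1 0) hstep).of_eq fun n => ?_
  induction n with
  | zero => rfl
  | succ n ih => simp_all [pre_succ, markedCode_append_singleton]

lemma tsum_inv_two_pow_add_succ (i : ℕ) :
    ∑' k : ℕ, (2 : ℝ≥0∞)⁻¹ ^ (k + i + 1) = 2⁻¹ ^ i := by
  simp_rw [add_assoc, pow_add, ENNReal.tsum_mul_right, ENNReal.tsum_geometric_two, pow_one]
  rw [mul_comm, mul_assoc, ENNReal.inv_mul_cancel two_ne_zero ENNReal.ofNat_ne_top, mul_one]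

lemma measure_biUnion_cyl_le {μ : MeasureTheory.Measure Seq} (hμ : FairCoin μ) {S : Set Str}
    (i : ℕ) (hlen : ∀ σ ∈ S, i < σ.length) (hinj : S.InjOn List.length) :
    μ (⋃ σ ∈ S, cyl σ) ≤ (2 : ℝ≥0∞)⁻¹ ^ i := by
  let k : S → ℕ := fun σ => σ.1.length - (i + 1)
  have hk : Function.Injective k := fun σ τ h =>
    Subtype.ext <| hinj σ.2 τ.2 <| by
      have := hlen σ σ.2; have := hlen τ τ.2; simp only [k] at h; omega
  calc μ (⋃ σ ∈ S, cyl σ) ≤ ∑' σ : S, μ (cyl σ) :=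
        MeasureTheory.measure_biUnion_le μ S.to_countable _
    _ = ∑' σ : S, (2 : ℝ≥0∞)⁻¹ ^ (k σ + i + 1) := by
      refine tsum_congr fun σ => ?_
      rw [hμ, show k σ + i + 1 = σ.1.length by have := hlen σ σ.2; simp only [k]; omega]
    _ ≤ ∑' n : ℕ, (2 : ℝ≥0∞)⁻¹ ^ (n + i + 1) :=
      ENNReal.tsum_comp_le_tsum_of_injective hk fun n => (2 : ℝ≥0∞)⁻¹ ^ (n + i + 1)
    _ = 2⁻¹ ^ i := tsum_inv_two_pow_add_succ i

def kuceraTestSet : Set (ℕ × Str) :=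
  {p | p.1 < p.2.length ∧ markedCode p.2 ∈ phi p.2.length p.2.length}

lemma cePred_kuceraTestSet : CEPred (· ∈ kuceraTestSet) := by
  have hlen : Computable fun p : ℕ × Str => p.2.length :=
    (Primrec.list_length.comp Primrec.snd).to_comp
  have hphi : Partrec fun p : ℕ × Str => phi p.2.length p.2.length :=
    Nat.Partrec.Code.eval_part.comp ((Computable.ofNat _).comp hlen) hlen
  have htest : Computable fun q : (ℕ × Str) × ℕ =>
      decide (q.1.1 < q.1.2.length ∧ q.2 = markedCode q.1.2) :=
    (PrimrecPred.and (Primrec.nat_lt.comp (Primrec.fst.comp Primrec.fst)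
      (Primrec.list_length.comp (Primrec.snd.comp Primrec.fst)))
      (Primrec.eq.comp Primrec.snd
        (primrec_markedCode.comp (Primrec.snd.comp Primrec.fst)))).decide.to_comp
  refine (Partrec.dom_re (hphi.bind
    (Partrec.cond htest (Partrec.const' (Part.some ())) Partrec.none).to₂)).of_eq fun p => ?_
  simp only [Part.dom_iff_mem, Part.mem_bind_iff, kuceraTestSet, Bool.cond_decide]
  constructor
  · rintro ⟨_, v, hv, hmem⟩
    split_ifs at hmem with h
    · exact ⟨h.1, h.2 ▸ hv⟩
    · exact absurd hmem (Part.notMem_none _)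
  · rintro ⟨hlt, hmem⟩
    exact ⟨(), _, hmem, by simp [hlt]⟩

lemma mlTest_kucera {μ : MeasureTheory.Measure Seq} (hμ : FairCoin μ) :
    MLTest μ fun i => ⋃ σ ∈ {σ : Str | (i, σ) ∈ kuceraTestSet}, cyl σ := by
  refine ⟨kuceraTestSet, cePred_kuceraTestSet, fun _ => rfl, fun i => ?_⟩
  refine measure_biUnion_cyl_le hμ i (fun σ hσ => hσ.1) fun σ hσ τ hτ hlen => ?_
  exact markedCode_inj_of_length_eq hlen (Part.mem_unique (hlen ▸ hσ.2) hτ.2)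

lemma MLRandom.exists_markedCode_pre_notMem_phi {μ : MeasureTheory.Measure Seq}
    (hμ : FairCoin μ) {A : Seq} (hA : MLRandom μ A) :
    ∃ i, ∀ e, i < e → markedCode (pre A e) ∉ phi e e := by
  obtain ⟨i, hi⟩ : ∃ i, A ∉ ⋃ σ ∈ {σ : Str | (i, σ) ∈ kuceraTestSet}, cyl σ := by
    simpa using hA _ (mlTest_kucera hμ)
  refine ⟨i, fun e he hmem => hi (Set.mem_biUnion (x := pre A e) ?_ (mem_cyl_pre A e))⟩
  simpa [kuceraTestSet, length_pre] using ⟨he, hmem⟩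

lemma _root_.Part.exists_notMem {α : Type*} [Nontrivial α] (p : Part α) : ∃ a, a ∉ p := by
  by_cases h : p.Dom
  · obtain ⟨a, ha⟩ := exists_ne (p.get h)
    exact ⟨a, fun hmem => ha (Part.mem_unique hmem (Part.get_mem h))⟩
  · obtain ⟨a⟩ := (inferInstance : Nonempty α)
    exact ⟨a, fun hmem => h (Part.dom_iff_mem.2 ⟨_, hmem⟩)⟩

/-- **Kučera**: every Martin-Löf random sequence has DNC degree: it computes a total
function `f` with `f(e) ≠ φ_e(e)` whenever `φ_e(e)↓`. -/
theorem MLRandom_DNC (μ : MeasureTheory.Measure Seq) (hμ : FairCoin μ)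
    (A : Seq) (hA : MLRandom μ A) :
    ∃ f : ℕ → ℕ, RecIn (oracleOf A) ↑f ∧
      ∀ e : ℕ, (phi e e).Dom → ¬ f e ∈ phi e e := by
  obtain ⟨i, hi⟩ := hA.exists_markedCode_pre_notMem_phi hμ
  choose t ht using fun e => Part.exists_notMem (phi e e)
  refine ⟨fun e => if i < e then markedCode (pre A e) else t e,
    (recIn_markedCode_pre A).of_eventuallyEq
      (Filter.eventually_atTop.2 ⟨i + 1, fun e he => if_pos he⟩), fun e _ => ?_⟩
  dsimp only
  split_ifs with he
  exacts [hi e he, ht e]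

end AR
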